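/- arXiv:2504.01225 — 2 statements merged into one kernel-verified Lean document; each statement's English description precedes it below -/
import Mathlib

section
/- Suppose R̂(λ) is a random variable depending on a fixed parameter λ, R(λ) ∈ ℝ, and g(t; R) is a function nondecreasing in t for every R such that P(R̂(λ) ≤ t) ≤ g(t; R(λ)) for all t. Define R̂⁺(λ) = sup{R : g(R̂(λ); R) ≥ δ}. Then P(R(λ) ≤ R̂⁺(λ)) ≥ 1 − δ. -/
/-!
On the event `g (R̂) R < δ` the bound `R̂⁺` may miss `R`; off it, `R` itself is a witness in the
supremum defining `R̂⁺`. Since `g (·) R` is monotone, the bad values of `R̂` form a lower set `A`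
on which the tail bound gives `P(R̂ ≤ t) < δ`, and by continuity from below this bound passes to
`P(R̂ ∈ A)`.
-/

open MeasureTheory

theorem IsLowerSet.measure_preimage_eq_iSup {Ω : Type*} [MeasurableSpace Ω] (μ : Measure Ω)
    (X : Ω → ℝ) {A : Set ℝ} (hA : IsLowerSet A) :
    μ (X ⁻¹' A) = ⨆ t ∈ A, μ {ω | X ω ≤ t} := by
  refine le_antisymm ?_ (iSup₂_le fun t ht => measure_mono fun ω hω => hA hω ht)
  by_cases hmax : ∃ a, IsGreatest A a
  · obtain ⟨a, haA, ha⟩ := hmax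
    calc μ (X ⁻¹' A) ≤ μ {ω | X ω ≤ a} := measure_mono fun ω hω => ha hω
      _ ≤ ⨆ t ∈ A, μ {ω | X ω ≤ t} := le_iSup₂ (f := fun t _ => μ {ω | X ω ≤ t}) a haA
  · -- Without a maximum, the rationals in `A` are cofinal in `A`: a countable directed family.
    let s : {q : ℚ // (q : ℝ) ∈ A} → Set Ω := fun q => {ω | X ω ≤ q}
    have hs : Monotone s := fun q r hqr ω hω =>
      le_trans (a := X ω) hω (by exact_mod_cast hqr)
    have hcover : X ⁻¹' A ⊆ ⋃ q, s q := by
      intro ω hω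
      obtain ⟨b, hbA, hb⟩ : ∃ b ∈ A, X ω < b := by
        have hω' : X ω ∉ upperBounds A := fun h => hmax ⟨X ω, hω, h⟩
        simpa [upperBounds] using hω'
      obtain ⟨q, hωq, hqb⟩ := exists_rat_btwn hb
      exact Set.mem_iUnion.2 ⟨⟨q, hA hqb.le hbA⟩, hωq.le⟩
    calc μ (X ⁻¹' A) ≤ μ (⋃ q, s q) := measure_mono hcover
      _ = ⨆ q, μ (s q) := hs.directed_le.measure_iUnion
      _ ≤ ⨆ t ∈ A, μ {ω | X ω ≤ t} :=
        iSup_le fun q => le_iSup₂ (f := fun t _ => μ {ω | X ω ≤ t}) (q : ℝ) q.2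

theorem ucb_coverage_general {Ω : Type*} [MeasurableSpace Ω]
    (μ : Measure Ω) [IsProbabilityMeasure μ]
    (Rhat : Ω → ℝ)
    (Rtrue : ℝ) (g : ℝ → ℝ → ℝ) (δ : ℝ) (hδ : δ ∈ Set.Ioo (0 : ℝ) 1)
    (hmono : ∀ R : ℝ, Monotone (fun t => g t R))
    (htail : ∀ t : ℝ, (μ {ω | Rhat ω ≤ t}).toReal ≤ g t Rtrue)
    (hbdd : ∀ ω, BddAbove {R : ℝ | δ ≤ g (Rhat ω) R}) :
    1 - δ ≤ (μ {ω | Rtrue ≤ sSup {R : ℝ | δ ≤ g (Rhat ω) R}}).toReal := by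
  set A : Set ℝ := {t | g t Rtrue < δ}
  have hA : IsLowerSet A := fun a b hba ha => (hmono Rtrue hba).trans_lt ha
  have hmiss : μ (Rhat ⁻¹' A) ≤ ENNReal.ofReal δ := by
    rw [hA.measure_preimage_eq_iSup]
    exact iSup₂_le fun t ht => (ENNReal.le_ofReal_iff_toReal_le (measure_ne_top _ _) hδ.1.le).2
      ((htail t).trans ht.le)
  have hmiss_real : μ.real (Rhat ⁻¹' A) ≤ δ := ENNReal.toReal_le_of_le_ofReal hδ.1.le hmiss
  have hcover : (Rhat ⁻¹' A)ᶜ ⊆ {ω | Rtrue ≤ sSup {R : ℝ | δ ≤ g (Rhat ω) R}} :=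
    fun ω hω => le_csSup (hbdd ω) (not_lt.1 (show ¬g (Rhat ω) Rtrue < δ from hω))
  have hsplit : 1 ≤ μ.real (Rhat ⁻¹' A) + μ.real (Rhat ⁻¹' A)ᶜ := by
    simpa [Set.union_compl_self] using measureReal_union_le (μ := μ) (Rhat ⁻¹' A) (Rhat ⁻¹' A)ᶜ
  calc 1 - δ ≤ μ.real (Rhat ⁻¹' A)ᶜ := by linarith
    _ ≤ μ.real {ω | Rtrue ≤ sSup {R : ℝ | δ ≤ g (Rhat ω) R}} := measureReal_mono hcover

/-- Proposition 1: conformal risk control upper confidence bound. -/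
theorem ucb_coverage {Ω : Type*} [MeasurableSpace Ω]
    (μ : Measure Ω) [IsProbabilityMeasure μ]
    (Rhat : Ω → ℝ) (hRhat : Measurable Rhat)
    (Rtrue : ℝ) (g : ℝ → ℝ → ℝ) (δ : ℝ) (hδ : δ ∈ Set.Ioo (0 : ℝ) 1)
    (hmono : ∀ R : ℝ, Monotone (fun t => g t R))
    (htail : ∀ t : ℝ, (μ {ω | Rhat ω ≤ t}).toReal ≤ g t Rtrue)
    (hbdd : ∀ ω, BddAbove {R : ℝ | δ ≤ g (Rhat ω) R}) :
    1 - δ ≤ (μ {ω | Rtrue ≤ sSup {R : ℝ | δ ≤ g (Rhat ω) R}}).toReal :=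
  ucb_coverage_general μ Rhat Rtrue g δ hδ hmono htail hbdd
end

section
/- Let X₁,…,Xₙ be i.i.d. random variables in [0,1] with mean R, and R̂ = (1/n)∑Xᵢ. Then for any t, P(R̂ ≤ t) ≤ e · P(Bi(n, R) ≤ ⌈n·t⌉), where Bi(n, R) is a Binomial random variable with n trials and success probability R. -/
/-!
Replacing the `Xᵢ` one at a time by Bernoulli(`R`) variables can only increase `E f(∑ Xᵢ)` for
convex `f`, since `f (x + y) ≤ (1 - x) f y + x f (y + 1)` for `x ∈ [0, 1]` and `E Xᵢ = R`.
For the hinge `f y = (h - y)₊` with `h = m + i`, `m ≥ n t` an integer, Markov's inequality then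
gives `i P(∑ Xᵢ ≤ n t) ≤ E (h - B)₊ = ∑_{j < m + i} F j`, where `B ~ Bi(n, R)` has distribution
function `F`. The binomial distribution is log-concave, hence so is `F`, so `F j ≤ F m ρ ^ (j - m)`
with `ρ = F (m + 1) / F m`; summing this geometric bound with `i ≈ 1 / log ρ` gives
`∑_{j < m + i} F j ≤ e i F m`.
-/

open MeasureTheory Finset ProbabilityTheory Real

lemma mul_exp_le_one_add_mul_exp_sub_one {s w : ℝ} (hw : 0 ≤ w) (hws : w ≤ s) :
    s * exp w ≤ (1 + w) * (exp s - 1) := by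
  have hshift : (1 + s) * exp w ≤ (1 + w) * exp s := by
    have h := add_one_le_exp (s - w)
    rw [exp_sub, le_div_iff₀ (exp_pos w)] at h
    nlinarith [exp_pos w, mul_nonneg hw (sub_nonneg.2 hws)]
  have hs : 1 + s ≤ exp s := by linarith [add_one_le_exp s]
  nlinarith [exp_pos w]

lemma exists_pow_le_exp_one_mul {ρ : ℝ} (hρ : 1 < ρ) :
    ∃ i : ℕ, 1 ≤ i ∧ ρ ^ i ≤ exp 1 * i * (ρ - 1) := by
  set s := log ρ
  have hs : 0 < s := log_pos hρ
  have hρs : exp s = ρ := exp_log (by linarith)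
  set i := ⌈s⁻¹⌉₊
  have hlo : 1 ≤ i * s := by
    have := (inv_le_iff_one_le_mul₀ hs).1 (Nat.le_ceil s⁻¹); linarith
  have hhi : i * s ≤ 1 + s := by
    have := mul_le_mul_of_nonneg_right (Nat.ceil_lt_add_one (inv_pos.2 hs).le).le hs.le
    rwa [add_mul, inv_mul_cancel₀ hs.ne', one_mul] at this
  have key :=
    mul_exp_le_one_add_mul_exp_sub_one (s := s) (w := i * s - 1) (by linarith) (by linarith)
  refine ⟨i, Nat.one_le_ceil_iff.2 (inv_pos.2 hs), ?_⟩
  calc ρ ^ i = exp 1 * exp (i * s - 1) := by rw [← hρs, ← exp_nat_mul, ← exp_add]; ring_nf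
    _ ≤ exp 1 * (i * (ρ - 1)) := by
        gcongr
        rw [hρs, add_sub_cancel] at key
        nlinarith
    _ = exp 1 * i * (ρ - 1) := by ring

/-- `a (k + 1) / a k` is antitone, in cross-multiplied form; for nonnegative sequences this is
log-concavity without internal zeros. -/
def RatioAntitone (a : ℕ → ℝ) : Prop :=
  ∀ ⦃i j : ℕ⦄, i ≤ j → a i * a (j + 1) ≤ a (i + 1) * a j

namespace RatioAntitone

variable {a : ℕ → ℝ}

lemma of_sq_le (h0 : ∀ j, 0 ≤ a j) (hmono : Monotone a)
    (hsq : ∀ j, a j * a (j + 2) ≤ a (j + 1) ^ 2) : RatioAntitone a := by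
  intro i j hij
  induction j, hij using Nat.le_induction with
  | base => rw [mul_comm]
  | succ j hij ih =>
    rcases (h0 j).eq_or_lt with hj | hj
    · have hi : a i = 0 := le_antisymm (hj ▸ hmono hij) (h0 i)
      rw [hi, zero_mul]
      exact mul_nonneg (h0 _) (h0 _)
    · refine le_of_mul_le_mul_left ?_ hj
      calc a j * (a i * a (j + 1 + 1)) = a i * (a j * a (j + 2)) := by ring
        _ ≤ a i * a (j + 1) ^ 2 := mul_le_mul_of_nonneg_left (hsq j) (h0 i)
        _ = a (j + 1) * (a i * a (j + 1)) := by ring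
        _ ≤ a (j + 1) * (a (i + 1) * a j) := mul_le_mul_of_nonneg_left ih (h0 _)
        _ = a j * (a (i + 1) * a (j + 1)) := by ring

lemma partialSum (h0 : ∀ k, 0 ≤ a k) (ha : RatioAntitone a) :
    RatioAntitone fun j => ∑ k ∈ range (j + 1), a k := by
  set S : ℕ → ℝ := fun j => ∑ k ∈ range (j + 1), a k
  have hS0 : ∀ j, 0 ≤ S j := fun j => sum_nonneg fun k _ => h0 k
  have hsucc : ∀ j, S (j + 1) = S j + a (j + 1) := fun j => sum_range_succ a (j + 1)
  refine of_sq_le hS0 (monotone_nat_of_le_succ fun j => by linarith [hsucc j, h0 (j + 1)])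
    fun j => ?_
  have hcross : S j * a (j + 2) ≤ S (j + 1) * a (j + 1) :=
    calc S j * a (j + 2) = ∑ k ∈ range (j + 1), a k * a (j + 1 + 1) := sum_mul ..
      _ ≤ ∑ k ∈ range (j + 1), a (k + 1) * a (j + 1) :=
          sum_le_sum fun k hk => ha (by grind)
      _ ≤ S (j + 1) * a (j + 1) := by
          rw [← sum_mul, show S (j + 1) = _ from sum_range_succ' a (j + 1)]
          exact mul_le_mul_of_nonneg_right (by linarith [h0 0]) (h0 _)
  calc S j * S (j + 2) = S j * S (j + 1) + S j * a (j + 2) := by rw [hsucc (j + 1)]; ring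
    _ ≤ S j * S (j + 1) + S (j + 1) * a (j + 1) := by gcongr
    _ = S (j + 1) ^ 2 := by rw [hsucc j]; ring

lemma mul_pow_le (h0 : ∀ j, 0 ≤ a j) (ha : RatioAntitone a) {m : ℕ} (hm : 0 < a m) (j : ℕ) :
    a j * (a (m + 1) / a m) ^ m ≤ a m * (a (m + 1) / a m) ^ j := by
  set ρ := a (m + 1) / a m
  have hρ : 0 ≤ ρ := div_nonneg (h0 _) hm.le
  have hup : ∀ k, m ≤ k → a (k + 1) ≤ ρ * a k := fun k hk => by
    have := ha hk
    rw [div_mul_eq_mul_div, le_div_iff₀ hm]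
    linarith
  have hdown : ∀ k, k ≤ m → ρ * a k ≤ a (k + 1) := fun k hk => by
    have := ha hk
    rw [div_mul_eq_mul_div, div_le_iff₀ hm]
    linarith
  rcases le_total m j with hmj | hjm
  · induction j, hmj using Nat.le_induction with
    | base => rw [mul_comm]
    | succ j hmj ih =>
      calc a (j + 1) * ρ ^ m ≤ ρ * (a j * ρ ^ m) := by
            rw [← mul_assoc]; exact mul_le_mul_of_nonneg_right (hup j hmj) (pow_nonneg hρ m)
        _ ≤ ρ * (a m * ρ ^ j) := mul_le_mul_of_nonneg_left ih hρ
        _ = a m * ρ ^ (j + 1) := by ring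
  · have hgeo : ∀ d ≤ m, a (m - d) * ρ ^ d ≤ a m := by
      intro d
      induction d with
      | zero => simp
      | succ d ih =>
        intro hd
        calc a (m - (d + 1)) * ρ ^ (d + 1) = ρ * a (m - (d + 1)) * ρ ^ d := by ring
          _ ≤ a (m - d) * ρ ^ d := by
              gcongr
              have h := hdown (m - (d + 1)) (by omega)
              rwa [show m - (d + 1) + 1 = m - d by omega] at h
          _ ≤ a m := ih (by omega)
    calc a j * ρ ^ m = a (m - (m - j)) * ρ ^ (m - j) * ρ ^ j := by
          rw [Nat.sub_sub_self hjm, mul_assoc, ← pow_add, Nat.sub_add_cancel hjm]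
      _ ≤ a m * ρ ^ j := by gcongr; exact hgeo _ (Nat.sub_le m j)

lemma exists_sum_range_le_exp_one_mul (h0 : ∀ j, 0 ≤ a j) (hmono : Monotone a)
    (ha : RatioAntitone a) (m : ℕ) :
    ∃ i : ℕ, 1 ≤ i ∧ ∑ j ∈ range (m + i), a j ≤ exp 1 * i * a m := by
  rcases (h0 m).eq_or_lt with hm | hm
  · refine ⟨1, le_rfl, ?_⟩
    rw [← hm, mul_zero]
    exact sum_nonpos fun j hj => hm ▸ hmono (by grind)
  set ρ := a (m + 1) / a m
  have hρ1 : 1 ≤ ρ := (one_le_div hm).2 (hmono m.le_succ)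
  have hsum : ∀ N, (∑ j ∈ range N, a j) * ρ ^ m ≤ a m * ∑ j ∈ range N, ρ ^ j := fun N => by
    rw [sum_mul, mul_sum]
    exact sum_le_sum fun j _ => ha.mul_pow_le h0 hm j
  rcases hρ1.eq_or_lt with hρ | hρ
  · refine ⟨m + 1, by omega, ?_⟩
    have h := hsum (m + (m + 1))
    simp only [← hρ, one_pow, mul_one, sum_const, card_range, nsmul_eq_mul] at h
    have he : (2 : ℝ) ≤ exp 1 := by linarith [add_one_le_exp (1 : ℝ)]
    calc ∑ j ∈ range (m + (m + 1)), a j ≤ a m * ↑(m + (m + 1)) := h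
      _ ≤ exp 1 * ↑(m + 1) * a m := by
          push_cast
          nlinarith [mul_nonneg (mul_nonneg (sub_nonneg.2 he) m.cast_add_one_pos.le) hm.le]
  · obtain ⟨i, hi, hρi⟩ := exists_pow_le_exp_one_mul hρ
    refine ⟨i, hi, le_of_mul_le_mul_right ?_ (pow_pos (by linarith : (0 : ℝ) < ρ) m)⟩
    have hρ0 : 0 < ρ - 1 := by linarith
    calc (∑ j ∈ range (m + i), a j) * ρ ^ m ≤ a m * ((ρ ^ (m + i) - 1) / (ρ - 1)) := by
          rw [← geom_sum_eq hρ.ne']; exact hsum _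
      _ ≤ a m * (ρ ^ i / (ρ - 1)) * ρ ^ m := by
          rw [mul_assoc, div_mul_eq_mul_div, ← pow_add, add_comm i]
          gcongr; linarith
      _ ≤ a m * (exp 1 * i) * ρ ^ m := by
          gcongr
          rwa [div_le_iff₀ hρ0]
      _ = exp 1 * i * a m * ρ ^ m := by ring

end RatioAntitone

lemma Nat.choose_mul_choose_succ_le (n : ℕ) {i j : ℕ} (hij : i ≤ j) :
    n.choose i * n.choose (j + 1) ≤ n.choose (i + 1) * n.choose j := by
  refine Nat.le_of_mul_le_mul_right (c := (i + 1) * (j + 1)) ?_ (by positivity)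
  calc n.choose i * n.choose (j + 1) * ((i + 1) * (j + 1))
      = n.choose i * (i + 1) * (n.choose (j + 1) * (j + 1)) := by ring
    _ = n.choose i * (i + 1) * (n.choose j * (n - j)) := by rw [Nat.choose_succ_right_eq]
    _ = n.choose i * n.choose j * ((n - j) * (i + 1)) := by ring
    _ ≤ n.choose i * n.choose j * ((n - i) * (j + 1)) := by gcongr
    _ = n.choose (i + 1) * (i + 1) * n.choose j * (j + 1) := by rw [Nat.choose_succ_right_eq]; ring
    _ = n.choose (i + 1) * n.choose j * ((i + 1) * (j + 1)) := by ring

noncomputable def binomialPMF (n : ℕ) (p : ℝ) (k : ℕ) : ℝ :=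
  n.choose k * p ^ k * (1 - p) ^ (n - k)

noncomputable def binomialCDF (n : ℕ) (p : ℝ) (j : ℕ) : ℝ :=
  ∑ k ∈ range (j + 1), binomialPMF n p k

section Binomial

variable {n : ℕ} {p : ℝ}

lemma binomialPMF_eq_zero_of_lt {k : ℕ} (hk : n < k) : binomialPMF n p k = 0 := by
  simp [binomialPMF, Nat.choose_eq_zero_of_lt hk]

lemma binomialPMF_nonneg (hp : p ∈ Set.Icc (0 : ℝ) 1) (k : ℕ) : 0 ≤ binomialPMF n p k := by
  have := hp.1
  have := sub_nonneg.2 hp.2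
  unfold binomialPMF
  positivity

lemma binomialPMF_succ_succ (k : ℕ) :
    binomialPMF (n + 1) p (k + 1) = p * binomialPMF n p k + (1 - p) * binomialPMF n p (k + 1) := by
  simp only [binomialPMF, Nat.choose_succ_succ, Nat.cast_add, show n + 1 - (k + 1) = n - k by omega]
  rcases lt_or_ge k n with hk | hk
  · rw [show n - k = n - (k + 1) + 1 by omega]
    ring
  · rw [Nat.choose_eq_zero_of_lt (Nat.lt_succ_of_le hk)]
    ring

lemma ratioAntitone_binomialPMF (hp : p ∈ Set.Icc (0 : ℝ) 1) :
    RatioAntitone (binomialPMF n p) := by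
  intro i j hij
  rcases lt_or_ge n (j + 1) with hn | hn
  · rw [binomialPMF_eq_zero_of_lt hn, mul_zero]
    exact mul_nonneg (binomialPMF_nonneg hp _) (binomialPMF_nonneg hp _)
  have hc : (n.choose i * n.choose (j + 1) : ℝ) ≤ n.choose (i + 1) * n.choose j := by
    exact_mod_cast n.choose_mul_choose_succ_le hij
  have := hp.1
  have := sub_nonneg.2 hp.2
  unfold binomialPMF
  rw [show n - i = n - (i + 1) + 1 by omega, show n - j = n - (j + 1) + 1 by omega]
  calc _ = (n.choose i * n.choose (j + 1) : ℝ) *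
        (p ^ (i + j + 1) * (1 - p) ^ (n - (i + 1) + (n - (j + 1)) + 1)) := by ring
    _ ≤ (n.choose (i + 1) * n.choose j : ℝ) *
        (p ^ (i + j + 1) * (1 - p) ^ (n - (i + 1) + (n - (j + 1)) + 1)) := by gcongr
    _ = _ := by ring

lemma sum_binomialPMF_succ_mul (g : ℕ → ℝ) :
    ∑ k ∈ range (n + 2), binomialPMF (n + 1) p k * g k =
      (1 - p) * ∑ k ∈ range (n + 1), binomialPMF n p k * g k +
        p * ∑ k ∈ range (n + 1), binomialPMF n p k * g (k + 1) := by
  have hzero : binomialPMF (n + 1) p 0 = (1 - p) * binomialPMF n p 0 := by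
    simp only [binomialPMF, Nat.choose_zero_right, Nat.cast_one, pow_zero, tsub_zero, pow_succ]
    ring
  have hext : ∑ k ∈ range (n + 1), binomialPMF n p k * g k =
      ∑ k ∈ range (n + 2), binomialPMF n p k * g k := by
    rw [sum_range_succ _ (n + 1), binomialPMF_eq_zero_of_lt (Nat.lt_succ_self n), zero_mul,
      add_zero]
  rw [hext, sum_range_succ', sum_range_succ' _ (n + 1), hzero]
  simp only [binomialPMF_succ_succ, add_mul, sum_add_distrib, mul_add, mul_sum]
  ring_nf

lemma binomialCDF_eq_sum_ite (m : ℕ) :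
    binomialCDF n p m = ∑ k ∈ range (n + 1), if k ≤ m then binomialPMF n p k else 0 := by
  rw [← sum_filter, binomialCDF]
  refine (sum_subset (fun k => by simp only [mem_filter, mem_range]; omega) fun k hk hk' => ?_).symm
  simp only [mem_range, mem_filter, not_and, not_le] at hk hk'
  exact binomialPMF_eq_zero_of_lt (by omega)

lemma binomialCDF_nonneg (hp : p ∈ Set.Icc (0 : ℝ) 1) (j : ℕ) : 0 ≤ binomialCDF n p j :=
  sum_nonneg fun k _ => binomialPMF_nonneg hp k

lemma monotone_binomialCDF (hp : p ∈ Set.Icc (0 : ℝ) 1) : Monotone (binomialCDF n p) :=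
  monotone_nat_of_le_succ fun j => by
    simp only [binomialCDF, sum_range_succ _ (j + 1)]
    linarith [binomialPMF_nonneg (n := n) hp (j + 1)]

lemma ratioAntitone_binomialCDF (hp : p ∈ Set.Icc (0 : ℝ) 1) :
    RatioAntitone (binomialCDF n p) :=
  (ratioAntitone_binomialPMF hp).partialSum (binomialPMF_nonneg hp)

lemma sum_binomialPMF_mul_max_sub (h : ℕ) :
    ∑ k ∈ range (n + 1), binomialPMF n p k * max ((h : ℝ) - k) 0 =
      ∑ j ∈ range h, binomialCDF n p j := by
  have hinge : ∀ k : ℕ, max ((h : ℝ) - k) 0 = ∑ j ∈ range h, if k ≤ j then 1 else 0 := by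
    intro k
    rw [sum_boole, show {j ∈ range h | k ≤ j} = Ico k h by ext; simp only [mem_filter, mem_range, mem_Ico]; omega, Nat.card_Ico]
    rcases le_total k h with hkh | hkh
    · rw [Nat.cast_sub hkh, max_eq_left (by simpa)]
    · rw [Nat.sub_eq_zero_of_le hkh, max_eq_right (by simpa)]
      simp
  simp_rw [hinge, mul_sum, binomialCDF_eq_sum_ite]
  rw [sum_comm]
  simp [mul_ite]

end Binomial

lemma sum_mem_Icc_zero_card {ι : Type*} (s : Finset ι) {x : ι → ℝ}
    (hx : ∀ i, x i ∈ Set.Icc (0 : ℝ) 1) : ∑ i ∈ s, x i ∈ Set.Icc 0 (#s : ℝ) :=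
  ⟨sum_nonneg fun i _ => (hx i).1, (sum_le_sum fun i _ => (hx i).2).trans_eq (by simp)⟩

section Domination

variable {Ω : Type*} [MeasurableSpace Ω] {μ : Measure Ω}

lemma integrable_comp_of_mem_Icc [IsFiniteMeasure μ] {f : ℝ → ℝ} (hf : Continuous f)
    {Y : Ω → ℝ} (hY : Measurable Y) {a b : ℝ} (hYab : ∀ ω, Y ω ∈ Set.Icc a b) :
    Integrable (fun ω => f (Y ω)) μ := by
  obtain ⟨C, hC⟩ := isCompact_Icc.exists_bound_of_continuousOn hf.continuousOn
  exact .of_bound (hf.measurable.comp hY).aestronglyMeasurable C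
    (ae_of_all _ fun ω => hC _ (hYab ω))

lemma mul_measureReal_le_le_integral_max_sub [IsFiniteMeasure μ] {Y : Ω → ℝ}
    (hY : Integrable Y μ) (h x : ℝ) :
    (h - x) * μ.real {ω | Y ω ≤ x} ≤ ∫ ω, max (h - Y ω) 0 ∂μ := by
  have hpos : 0 ≤ᵐ[μ] fun ω => max (h - Y ω) 0 := ae_of_all _ fun ω => le_max_right _ _
  rcases le_or_gt (h - x) 0 with hhx | hhx
  · exact (mul_nonpos_of_nonpos_of_nonneg hhx measureReal_nonneg).trans (integral_nonneg_of_ae hpos)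
  calc (h - x) * μ.real {ω | Y ω ≤ x} ≤ (h - x) * μ.real {ω | h - x ≤ max (h - Y ω) 0} := by
        refine mul_le_mul_of_nonneg_left (measureReal_mono fun ω (hω : Y ω ≤ x) => ?_) hhx.le
        exact le_max_of_le_left (sub_le_sub_left hω h)
    _ ≤ ∫ ω, max (h - Y ω) 0 ∂μ :=
        mul_meas_ge_le_integral_of_nonneg hpos ((integrable_const h).sub hY).pos_part _

variable [IsProbabilityMeasure μ]

lemma integral_convexOn_add_le {X Y : Ω → ℝ} (hX : Measurable X) (hY : Measurable Y)
    (hXY : IndepFun X Y μ) (hX01 : ∀ ω, X ω ∈ Set.Icc (0 : ℝ) 1) {a b : ℝ}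
    (hYab : ∀ ω, Y ω ∈ Set.Icc a b) {f : ℝ → ℝ} (hconv : ConvexOn ℝ Set.univ f)
    (hcont : Continuous f) :
    ∫ ω, f (X ω + Y ω) ∂μ ≤
      (1 - ∫ ω, X ω ∂μ) * ∫ ω, f (Y ω) ∂μ + (∫ ω, X ω ∂μ) * ∫ ω, f (Y ω + 1) ∂μ := by
  have hfY : Integrable (fun ω => f (Y ω)) μ := integrable_comp_of_mem_Icc hcont hY hYab
  have hfY1 : Integrable (fun ω => f (Y ω + 1)) μ :=
    integrable_comp_of_mem_Icc hcont (hY.add_const 1) (a := a + 1) (b := b + 1)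
      fun ω => ⟨by linarith [(hYab ω).1], by linarith [(hYab ω).2]⟩
  have hfXY : Integrable (fun ω => f (X ω + Y ω)) μ :=
    integrable_comp_of_mem_Icc hcont (hX.add hY) (b := b + 1)
      fun ω => ⟨by linarith [(hYab ω).1, (hX01 ω).1], by linarith [(hYab ω).2, (hX01 ω).2]⟩
  have hXle : ∀ᵐ ω ∂μ, ‖X ω‖ ≤ 1 := ae_of_all _ fun ω => by
    rw [Real.norm_of_nonneg (hX01 ω).1]; exact (hX01 ω).2
  have hXfY := hfY.bdd_mul hX.aestronglyMeasurable hXle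
  have hXfY1 := hfY1.bdd_mul hX.aestronglyMeasurable hXle
  have hfY_sub : Integrable (fun ω => f (Y ω) - X ω * f (Y ω)) μ := hfY.sub hXfY
  have hmul : ∀ g : ℝ → ℝ, Measurable g →
      ∫ ω, X ω * g (Y ω) ∂μ = (∫ ω, X ω ∂μ) * ∫ ω, g (Y ω) ∂μ :=
    fun g hg => (hXY.comp measurable_id hg).integral_fun_mul_eq_mul_integral
      hX.aestronglyMeasurable (hg.comp hY).aestronglyMeasurable
  have hpt : ∀ ω, f (X ω + Y ω) ≤ f (Y ω) - X ω * f (Y ω) + X ω * f (Y ω + 1) := fun ω => by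
    have := hconv.2 (Set.mem_univ (Y ω)) (Set.mem_univ (Y ω + 1)) (sub_nonneg.2 (hX01 ω).2)
      (hX01 ω).1 (sub_add_cancel 1 (X ω))
    simp only [smul_eq_mul] at this
    calc f (X ω + Y ω) = f ((1 - X ω) * Y ω + X ω * (Y ω + 1)) := by congr 1; ring
      _ ≤ (1 - X ω) * f (Y ω) + X ω * f (Y ω + 1) := this
      _ = _ := by ring
  calc ∫ ω, f (X ω + Y ω) ∂μ ≤ ∫ ω, (f (Y ω) - X ω * f (Y ω) + X ω * f (Y ω + 1)) ∂μ :=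
        integral_mono hfXY (hfY_sub.add hXfY1) hpt
    _ = _ := by
        rw [integral_add hfY_sub hXfY1, integral_sub hfY hXfY,
          hmul f hcont.measurable, hmul (fun y => f (y + 1)) (by fun_prop)]
        ring

lemma integral_convexOn_sum_le {ι : Type*} {X : ι → Ω → ℝ} (hmeas : ∀ i, Measurable (X i))
    (hindep : iIndepFun X μ) (hbound : ∀ i ω, X i ω ∈ Set.Icc (0 : ℝ) 1) {R : ℝ}
    (hmean : ∀ i, ∫ ω, X i ω ∂μ = R) (s : Finset ι) {f : ℝ → ℝ}
    (hconv : ConvexOn ℝ Set.univ f) (hcont : Continuous f) :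
    ∫ ω, f (∑ i ∈ s, X i ω) ∂μ ≤ ∑ k ∈ range (#s + 1), binomialPMF #s R k * f k := by
  classical
  induction s using Finset.induction_on generalizing f with
  | empty => simp [binomialPMF]
  | insert a s ha ih =>
    have hR : R ∈ Set.Icc (0 : ℝ) 1 := hmean a ▸
      ⟨integral_nonneg fun ω => (hbound a ω).1, (integral_mono
        (integrable_comp_of_mem_Icc continuous_id (hmeas a) (hbound a)) (integrable_const 1)
        fun ω => (hbound a ω).2).trans (by simp)⟩
    have hind : IndepFun (X a) (fun ω => ∑ i ∈ s, X i ω) μ := by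
      have := (hindep.indepFun_finsetSum_of_notMem hmeas ha).symm
      rwa [Finset.sum_fn] at this
    have hstep := integral_convexOn_add_le (hmeas a) (Finset.measurable_sum s fun i _ => hmeas i)
      hind (hbound a) (fun ω => sum_mem_Icc_zero_card s fun i => hbound i ω) hconv hcont
    have hshift : ConvexOn ℝ Set.univ fun x => f (x + 1) := by
      have := hconv.translate_left 1
      rw [Set.preimage_univ] at this
      exact this
    rw [hmean a] at hstep
    simp only [sum_insert ha, card_insert_of_notMem ha, sum_binomialPMF_succ_mul]
    refine hstep.trans (add_le_add ?_ ?_)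
    · exact mul_le_mul_of_nonneg_left (ih hconv hcont) (sub_nonneg.2 hR.2)
    · refine mul_le_mul_of_nonneg_left ((ih hshift (by fun_prop)).trans_eq ?_) hR.1
      push_cast
      rfl

lemma mul_measureReal_sum_le_le_sum_binomialCDF {n : ℕ} {X : Fin n → Ω → ℝ}
    (hmeas : ∀ i, Measurable (X i)) (hindep : iIndepFun X μ)
    (hbound : ∀ i ω, X i ω ∈ Set.Icc (0 : ℝ) 1) {R : ℝ} (hmean : ∀ i, ∫ ω, X i ω ∂μ = R)
    {x : ℝ} {m : ℕ} (hxm : x ≤ m) (i : ℕ) :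
    i * μ.real {ω | ∑ k, X k ω ≤ x} ≤ ∑ j ∈ range (m + i), binomialCDF n R j := by
  have hS : Integrable (fun ω => ∑ k, X k ω) μ :=
    integrable_comp_of_mem_Icc continuous_id (Finset.measurable_sum _ fun k _ => hmeas k)
      fun ω => sum_mem_Icc_zero_card univ fun k => hbound k ω
  have hinge : ConvexOn ℝ Set.univ fun y : ℝ => max (((m + i : ℕ) : ℝ) - y) 0 :=
    ((convexOn_const _ convex_univ).sub (concaveOn_id (𝕜 := ℝ) convex_univ)).sup
      (convexOn_const 0 convex_univ)
  calc i * μ.real {ω | ∑ k, X k ω ≤ x}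
      ≤ (((m + i : ℕ) : ℝ) - x) * μ.real {ω | ∑ k, X k ω ≤ x} := by
        gcongr; push_cast; linarith
    _ ≤ ∫ ω, max (((m + i : ℕ) : ℝ) - ∑ k, X k ω) 0 ∂μ :=
        mul_measureReal_le_le_integral_max_sub hS _ _
    _ ≤ ∑ k ∈ range (n + 1), binomialPMF n R k * max (((m + i : ℕ) : ℝ) - k) 0 := by
        simpa using integral_convexOn_sum_le hmeas hindep hbound hmean univ hinge (by fun_prop)
    _ = ∑ j ∈ range (m + i), binomialCDF n R j := sum_binomialPMF_mul_max_sub (m + i)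

end Domination

theorem bentkus_lower_tail_general {Ω : Type*} [MeasurableSpace Ω]
    (μ : Measure Ω) [IsProbabilityMeasure μ] (n : ℕ)
    (X : Fin n → Ω → ℝ) (hmeas : ∀ i, Measurable (X i))
    (hindep : ProbabilityTheory.iIndepFun X μ)
    (hbound : ∀ i ω, X i ω ∈ Set.Icc (0 : ℝ) 1)
    (R : ℝ) (hR : R ∈ Set.Icc (0 : ℝ) 1) (hmean : ∀ i, ∫ ω, X i ω ∂μ = R)
    (t : ℝ) :
    (μ {ω | (∑ i, X i ω) / n ≤ t}).toReal ≤
      Real.exp 1 *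
        ∑ k ∈ Finset.range (n + 1),
          (if (k : ℤ) ≤ ⌈(n : ℝ) * t⌉ then (n.choose k : ℝ) * R ^ k * (1 - R) ^ (n - k) else 0) := by
  have hsub : {ω | (∑ i, X i ω) / n ≤ t} ⊆ {ω | ∑ i, X i ω ≤ n * t} :=
    fun ω (hω : (∑ i, X i ω) / n ≤ t) => by
      rcases n.eq_zero_or_pos with rfl | hn
      · simp
      · exact (div_le_iff₀' (Nat.cast_pos.2 hn)).1 hω
  refine (measureReal_mono (μ := μ) hsub).trans ?_
  change _ ≤ exp 1 * ∑ k ∈ range (n + 1),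
    if (k : ℤ) ≤ ⌈(n : ℝ) * t⌉ then binomialPMF n R k else 0
  rcases lt_or_ge ⌈(n : ℝ) * t⌉ 0 with hneg | hnonneg
  · have hempty : {ω | ∑ i, X i ω ≤ n * t} = ∅ := Set.eq_empty_of_forall_notMem
      fun ω (hω : ∑ i, X i ω ≤ n * t) => by
        have hS := (sum_mem_Icc_zero_card univ fun i => hbound i ω).1
        have hnt := Int.ceil_lt_iff.1 hneg
        push_cast at hnt
        linarith
    rw [hempty, measureReal_empty]
    refine mul_nonneg (exp_pos 1).le (sum_nonneg fun k _ => ?_)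
    split_ifs
    exacts [binomialPMF_nonneg hR k, le_rfl]
  obtain ⟨m, hm⟩ := Int.eq_ofNat_of_zero_le hnonneg
  simp only [hm, Nat.cast_le, ← binomialCDF_eq_sum_ite]
  obtain ⟨i, hi, hsum⟩ := (ratioAntitone_binomialCDF hR).exists_sum_range_le_exp_one_mul
    (binomialCDF_nonneg hR) (monotone_binomialCDF hR) m
  have hxm : (n : ℝ) * t ≤ m := by exact_mod_cast hm ▸ Int.le_ceil _
  refine le_of_mul_le_mul_left ?_ (show (0 : ℝ) < i by exact_mod_cast hi)
  calc i * μ.real {ω | ∑ k, X k ω ≤ n * t}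
      ≤ ∑ j ∈ range (m + i), binomialCDF n R j :=
        mul_measureReal_sum_le_le_sum_binomialCDF hmeas hindep hbound hmean hxm i
    _ ≤ exp 1 * i * binomialCDF n R m := hsum
    _ = i * (exp 1 * binomialCDF n R m) := by ring

/-- Bentkus' inequality for the lower tail of a bounded empirical mean. -/
theorem bentkus_lower_tail {Ω : Type*} [MeasurableSpace Ω]
    (μ : Measure Ω) [IsProbabilityMeasure μ] (n : ℕ) (hn : 0 < n)
    (X : Fin n → Ω → ℝ) (hmeas : ∀ i, Measurable (X i))
    (hindep : ProbabilityTheory.iIndepFun X μ)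
    (hident : ∀ i j, μ.map (X i) = μ.map (X j))
    (hbound : ∀ i ω, X i ω ∈ Set.Icc (0 : ℝ) 1)
    (R : ℝ) (hR : R ∈ Set.Icc (0 : ℝ) 1) (hmean : ∀ i, ∫ ω, X i ω ∂μ = R)
    (t : ℝ) :
    (μ {ω | (∑ i, X i ω) / n ≤ t}).toReal ≤
      Real.exp 1 *
        ∑ k ∈ Finset.range (n + 1),
          (if (k : ℤ) ≤ ⌈(n : ℝ) * t⌉ then (n.choose k : ℝ) * R ^ k * (1 - R) ^ (n - k) else 0) :=
  bentkus_lower_tail_general μ n X hmeas hindep hbound R hR hmean t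
end
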